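/- arXiv:2512.04595 — 3 statements merged into one kernel-verified Lean document; each statement's English description precedes it below -/
import Mathlib

section
/- Let a < 0 and F(x) = max(x + a, 0). Define C[v] = (2/π) ∫₀^π F(v·cos φ)·cos φ dφ. Then for 0 ≤ v < |a|, C[v] = 0, and for v > |a|, C[v] = (1/π)·(v·arccos(-a/v) + a·√(v² - a²)/v). -/
/-!
Over a half period the diode conducts exactly on `[0, θ]`, where the conduction angle `θ`
solves `v cos θ + a = 0`, i.e. `θ = arccos (-a / v)`; there the integrand is
`v cos² φ + a cos φ`, whose integral is elementary, and elsewhere it vanishes. For `v < |a|`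
no such angle exists and the integrand vanishes identically.
-/

open Real Set intervalIntegral

theorem integral_max_mul_cos_eq_zero {v a α β : ℝ}
    (h : ∀ φ ∈ uIcc α β, v * cos φ + a ≤ 0) :
    ∫ φ in α..β, max (v * cos φ + a) 0 * cos φ = 0 := by
  rw [integral_congr (g := fun _ => 0) fun φ hφ => by
    simp only [max_eq_right (h φ hφ), zero_mul], integral_zero]

theorem integral_mul_cos_sq_add_mul_cos (v a θ : ℝ) :
    ∫ φ in (0 : ℝ)..θ, (v * cos φ ^ 2 + a * cos φ) =
      v * ((cos θ * sin θ + θ) / 2) + a * sin θ := by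
  rw [integral_add ((by fun_prop : Continuous fun φ => v * cos φ ^ 2).intervalIntegrable _ _)
      ((by fun_prop : Continuous fun φ => a * cos φ).intervalIntegrable _ _),
    integral_const_mul, integral_const_mul, integral_cos_sq, integral_cos]
  simp

theorem integral_max_mul_cos_of_conduction_angle {v a θ : ℝ} (hv : 0 ≤ v)
    (hθ₀ : 0 ≤ θ) (hθπ : θ ≤ π) (hθ : v * cos θ + a = 0) :
    ∫ φ in (0 : ℝ)..π, max (v * cos φ + a) 0 * cos φ =
      v * ((cos θ * sin θ + θ) / 2) + a * sin θ := by
  have hconducting : ∫ φ in (0 : ℝ)..θ, max (v * cos φ + a) 0 * cos φ =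
      ∫ φ in (0 : ℝ)..θ, (v * cos φ ^ 2 + a * cos φ) := by
    refine integral_congr fun φ hφ => ?_
    rw [uIcc_of_le hθ₀] at hφ
    have : cos θ ≤ cos φ := cos_le_cos_of_nonneg_of_le_pi hφ.1 hθπ hφ.2
    rw [max_eq_left (by nlinarith)]
    ring
  have hblocked : ∫ φ in θ..π, max (v * cos φ + a) 0 * cos φ = 0 := by
    refine integral_max_mul_cos_eq_zero fun φ hφ => ?_
    rw [uIcc_of_le hθπ] at hφ
    have : cos φ ≤ cos θ := cos_le_cos_of_nonneg_of_le_pi hθ₀ hφ.2 hφ.1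
    nlinarith
  have hint : Continuous fun φ => max (v * cos φ + a) 0 * cos φ := by fun_prop
  rw [← integral_add_adjacent_intervals (hint.intervalIntegrable 0 θ)
    (hint.intervalIntegrable θ π), hconducting, hblocked, add_zero,
    integral_mul_cos_sq_add_mul_cos]

theorem sqrt_one_sub_div_sq {v : ℝ} (hv : 0 < v) (a : ℝ) :
    √(1 - (a / v) ^ 2) = √(v ^ 2 - a ^ 2) / v := by
  rw [show 1 - (a / v) ^ 2 = (v ^ 2 - a ^ 2) / v ^ 2 by field_simp, sqrt_div' _ (sq_nonneg v),
    sqrt_sq hv.le]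

theorem shifted_relu_neg_fundamental_harmonic (a : ℝ) (ha : a < 0) :
    (∀ v : ℝ, 0 ≤ v → v < |a| →
      (2 / π) * ∫ φ in (0:ℝ)..π, max (v * Real.cos φ + a) 0 * Real.cos φ = 0) ∧
    (∀ v : ℝ, |a| < v →
      (2 / π) * ∫ φ in (0:ℝ)..π, max (v * Real.cos φ + a) 0 * Real.cos φ =
        (1 / π) * (v * Real.arccos (-a / v) + a * Real.sqrt (v ^ 2 - a ^ 2) / v)) := by
  rw [abs_of_neg ha]
  refine ⟨fun v hv₀ hv => ?_, fun v hv => ?_⟩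
  · rw [integral_max_mul_cos_eq_zero fun φ _ => by nlinarith [cos_le_one φ], mul_zero]
  · have hv₀ : 0 < v := by linarith
    have hcos : cos (arccos (-a / v)) = -a / v :=
      cos_arccos (by rw [le_div_iff₀ hv₀]; linarith) (by rw [div_le_one hv₀]; linarith)
    have hsin : sin (arccos (-a / v)) = √(v ^ 2 - a ^ 2) / v := by
      rw [sin_arccos, neg_div, neg_sq, sqrt_one_sub_div_sq hv₀]
    rw [integral_max_mul_cos_of_conduction_angle hv₀.le (arccos_nonneg _) (arccos_le_pi _)
      (by rw [hcos]; field_simp; ring), hcos, hsin]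
    field_simp
    ring
end

section
/- Let F(x) = max(x, 0). Then the induced low-pass activation σ(x) = C[|x|]·e^{j arg x} with C[v] = (2/π)∫₀^π F(v cos φ) cos φ dφ satisfies σ(x) = x/2 for all x ∈ ℂ, i.e., the RF ReLU induces a purely linear low-pass response. -/
/-!
Write the half-wave rectifier as `max a 0 = (a + |a|) / 2`. The linear half contributes
`(v / 2) ∫₀^π cos² = v π / 4` to the first Fourier coefficient, while the full-wave part
`|v cos φ| cos φ` is odd under `φ ↦ π - φ` and integrates to zero over `[0, π]`.
Hence `C v = v / 2` for every `v`, and `σ x = (‖x‖ / 2) e^{i arg x} = x / 2`.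
-/

open Real Complex

lemma max_zero_eq_add_abs_div_two (a : ℝ) : max a 0 = (a + |a|) / 2 := by
  rcases le_total 0 a with h | h
  · rw [max_eq_left h, abs_of_nonneg h]; ring
  · rw [max_eq_right h, abs_of_nonpos h]; ring

lemma integral_abs_mul_cos_mul_cos (v : ℝ) :
    ∫ φ in (0:ℝ)..π, |v * Real.cos φ| * Real.cos φ = 0 := by
  have h_reflect := intervalIntegral.integral_comp_sub_left
    (fun φ => |v * Real.cos φ| * Real.cos φ) (a := 0) (b := π) π
  simp only [Real.cos_pi_sub, mul_neg, abs_neg, intervalIntegral.integral_neg, sub_self,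
    sub_zero] at h_reflect
  linarith

lemma integral_max_mul_cos_mul_cos (v : ℝ) :
    ∫ φ in (0:ℝ)..π, max (v * Real.cos φ) 0 * Real.cos φ = v * π / 4 := by
  have h_cont : Continuous fun φ => v * Real.cos φ ^ 2 := by fun_prop
  have h_cont_abs : Continuous fun φ => |v * Real.cos φ| * Real.cos φ := by fun_prop
  calc ∫ φ in (0:ℝ)..π, max (v * Real.cos φ) 0 * Real.cos φ
      = ∫ φ in (0:ℝ)..π, (v * Real.cos φ ^ 2 + |v * Real.cos φ| * Real.cos φ) / 2 := by
        congr 1; ext φ; rw [max_zero_eq_add_abs_div_two]; ring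
    _ = ((∫ φ in (0:ℝ)..π, v * Real.cos φ ^ 2) +
          ∫ φ in (0:ℝ)..π, |v * Real.cos φ| * Real.cos φ) / 2 := by
        rw [intervalIntegral.integral_div, intervalIntegral.integral_add
          (h_cont.intervalIntegrable _ _) (h_cont_abs.intervalIntegrable _ _)]
    _ = v * π / 4 := by
        rw [integral_abs_mul_cos_mul_cos, intervalIntegral.integral_const_mul, integral_cos_sq]
        simp only [Real.cos_pi, Real.sin_pi, Real.cos_zero, Real.sin_zero]
        ring

theorem rf_relu_induces_linear_lowpass (C : ℝ → ℝ)
    (hC : ∀ v, C v = (2 / π) * ∫ φ in (0:ℝ)..π, max (v * Real.cos φ) 0 * Real.cos φ)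
    (σ : ℂ → ℂ) (hσ0 : σ 0 = 0)
    (hσ : ∀ x : ℂ, x ≠ 0 →
      σ x = (C ‖x‖ : ℂ) * Complex.exp (Complex.I * (Complex.arg x : ℂ))) :
    ∀ x : ℂ, σ x = x / 2 := by
  have hC_half : ∀ v, C v = v / 2 := fun v => by
    rw [hC, integral_max_mul_cos_mul_cos]
    field_simp [Real.pi_ne_zero]
    ring
  intro x
  rcases eq_or_ne x 0 with rfl | hx
  · simp [hσ0]
  · rw [hσ x hx, hC_half, mul_comm I]
    conv_rhs => rw [← Complex.norm_mul_exp_arg_mul_I x]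
    push_cast
    ring
end

section
/- Let F : ℝ → ℝ be monotone nondecreasing with F(0) ≥ 0. Then C[v] = (2/π) ∫₀^π F(v cos φ) cos φ dφ ≥ 0 for all v ≥ 0. -/
open Real Set MeasureTheory intervalIntegral
open scoped Interval

/-! Pairing `φ` with `π - φ` folds the integral onto `[0, π/2]`, where the integrand becomes
`(F (v cos φ) - F (-v cos φ)) cos φ`, nonnegative because `F` is monotone and `cos φ ≥ 0`. -/

theorem intervalIntegral.integral_eq_integral_add_comp_sub {E : Type*} [NormedAddCommGroup E]
    [NormedSpace ℝ E] {f : ℝ → E} {a b : ℝ} (hf : IntervalIntegrable f volume a b) :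
    ∫ x in a..b, f x = ∫ x in a..(a + b) / 2, (f x + f (a + b - x)) := by
  have hmid : (a + b) / 2 ∈ [[a, b]] := by
    rcases le_total a b with hab | hab
    · rw [uIcc_of_le hab]; constructor <;> linarith
    · rw [uIcc_of_ge hab]; constructor <;> linarith
  have h₁ : IntervalIntegrable f volume a ((a + b) / 2) := hf.mono_set (uIcc_subset_uIcc_left hmid)
  have h₂ : IntervalIntegrable f volume ((a + b) / 2) b := hf.mono_set (uIcc_subset_uIcc_right hmid)
  have h₂' : IntervalIntegrable (fun x ↦ f (a + b - x)) volume a ((a + b) / 2) := by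
    convert (h₂.comp_sub_left (a + b)).symm using 1 <;> ring
  rw [integral_add h₁ h₂', integral_comp_sub_left, ← integral_add_adjacent_intervals h₁ h₂]
  congr 2 <;> ring

theorem Monotone.intervalIntegrable_comp_mul_cos_mul_cos {F : ℝ → ℝ} (hF : Monotone F) {v : ℝ}
    (hv : 0 ≤ v) : IntervalIntegrable (fun φ ↦ F (v * cos φ) * cos φ) volume 0 π := by
  have hanti : AntitoneOn (fun φ ↦ F (v * cos φ)) [[0, π]] := by
    rw [uIcc_of_le pi_pos.le]
    exact fun x hx y hy hxy ↦ hF (mul_le_mul_of_nonneg_left (antitoneOn_cos hx hy hxy) hv)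
  exact hanti.intervalIntegrable.mul_continuousOn continuous_cos.continuousOn

theorem Monotone.comp_mul_cos_mul_cos_add_comp_pi_sub_nonneg {F : ℝ → ℝ} (hF : Monotone F)
    {v : ℝ} (hv : 0 ≤ v) {φ : ℝ} (hφ : φ ∈ Icc 0 (π / 2)) :
    0 ≤ F (v * cos φ) * cos φ + F (v * cos (π - φ)) * cos (π - φ) := by
  have hcos : 0 ≤ cos φ := cos_nonneg_of_mem_Icc ⟨by linarith [pi_pos, hφ.1], hφ.2⟩
  have hle : F (v * -cos φ) ≤ F (v * cos φ) := hF (by nlinarith)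
  calc 0 ≤ (F (v * cos φ) - F (v * -cos φ)) * cos φ := mul_nonneg (sub_nonneg.2 hle) hcos
    _ = _ := by rw [cos_pi_sub]; ring

theorem monotone_nonlinearity_fundamental_harmonic_nonneg_general (F : ℝ → ℝ)
    (hF : Monotone F) (v : ℝ) (hv : 0 ≤ v) :
    0 ≤ (2 / π) * ∫ φ in (0:ℝ)..π, F (v * Real.cos φ) * Real.cos φ := by
  refine mul_nonneg (by positivity) ?_
  rw [integral_eq_integral_add_comp_sub (hF.intervalIntegrable_comp_mul_cos_mul_cos hv), zero_add]
  refine integral_nonneg (by positivity) fun φ hφ ↦ ?_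
  exact hF.comp_mul_cos_mul_cos_add_comp_pi_sub_nonneg hv hφ

theorem monotone_nonlinearity_fundamental_harmonic_nonneg (F : ℝ → ℝ)
    (hF : Monotone F) (hF0 : 0 ≤ F 0) (v : ℝ) (hv : 0 ≤ v) :
    0 ≤ (2 / π) * ∫ φ in (0:ℝ)..π, F (v * Real.cos φ) * Real.cos φ :=
  monotone_nonlinearity_fundamental_harmonic_nonneg_general F hF v hv
end
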